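/- Let (Σ, d) be a metric space in which d(x,y) ≤ π for all x, y ∈ Σ. Define D on Σ × [0,∞) by D((x,t),(y,s)) = √(t² + s² − 2ts·cos(d(x,y))). Then D is a pseudometric (it is nonnegative, symmetric, and satisfies the triangle inequality), and D((x,t),(y,s)) = 0 if and only if t = s and either t = 0 or x = y. In particular, D descends to a metric on the cone Σ × [0,∞)/(Σ × {0}). -/

import Mathlib

open NNReal

/-- The cone distance on `Σ × [0,∞)`:
`D((x,t),(y,s)) = √(t² + s² − 2ts·cos d(x,y))`. -/
noncomputable def coneDist {S : Type*} [MetricSpace S]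
    (p q : S × ℝ≥0) : ℝ :=
  Real.sqrt ((p.2 : ℝ) ^ 2 + (q.2 : ℝ) ^ 2 -
    2 * (p.2 : ℝ) * (q.2 : ℝ) * Real.cos (dist p.1 q.1))

/-!
`D((x,t),(y,s))` is the third side of a Euclidean triangle with sides `t`, `s` enclosing the
angle `θ = d(x,y)`, i.e. `|t - s·e^{iθ}|` in `ℂ`. Placing the triangles for `(t,u,a)` and
`(u,s,b)` side by side in the plane gives `D(t,s,a+b) ≤ D(t,u,a) + D(u,s,b)` for all angles
`a, b`. Since `D(t,s,·)` is monotone on `[0,π]`, the triangle inequality for `d` (and `d ≤ π`)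
lets us first enlarge the angle `d(x,z)` to `d(x,y) + min (d(y,z)) (π - d(x,y))` and then
split it.
-/

open Real Complex Set

noncomputable def cosineLawDist (t s θ : ℝ) : ℝ :=
  √(t ^ 2 + s ^ 2 - 2 * t * s * Real.cos θ)

lemma coneDist_eq_cosineLawDist {S : Type*} [MetricSpace S] (p q : S × ℝ≥0) :
    coneDist p q = cosineLawDist p.2 q.2 (dist p.1 q.1) := rfl

namespace cosineLawDist

lemma comm (t s θ : ℝ) : cosineLawDist t s θ = cosineLawDist s t θ := by
  unfold cosineLawDist
  ring_nf

lemma eq_norm_sub_mul_exp (t s θ : ℝ) :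
    cosineLawDist t s θ = ‖(t : ℂ) - s * exp (θ * I)‖ := by
  rw [cosineLawDist, Complex.norm_def, Complex.normSq_apply]
  congr 1
  simp only [sub_re, sub_im, mul_re, mul_im, exp_ofReal_mul_I_re, exp_ofReal_mul_I_im,
    ofReal_re, ofReal_im]
  linear_combination (-s ^ 2) * Real.sin_sq_add_cos_sq θ

lemma add_le (t u s a b : ℝ) :
    cosineLawDist t s (a + b) ≤ cosineLawDist t u a + cosineLawDist u s b := by
  simp only [eq_norm_sub_mul_exp]
  have hrotate : (u : ℂ) * exp (a * I) - s * exp ((a + b : ℝ) * I)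
      = exp (a * I) * (u - s * exp (b * I)) := by
    rw [ofReal_add, add_mul, Complex.exp_add]
    ring
  calc ‖(t : ℂ) - s * exp ((a + b : ℝ) * I)‖
      ≤ ‖(t : ℂ) - u * exp (a * I)‖ + ‖(u : ℂ) * exp (a * I) - s * exp ((a + b : ℝ) * I)‖ :=
        norm_sub_le_norm_sub_add_norm_sub _ _ _
    _ = ‖(t : ℂ) - u * exp (a * I)‖ + ‖(u : ℂ) - s * exp (b * I)‖ := by
        rw [hrotate, norm_mul, norm_exp_ofReal_mul_I, one_mul]

lemma monotoneOn {t s : ℝ} (ht : 0 ≤ t) (hs : 0 ≤ s) :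
    MonotoneOn (cosineLawDist t s) (Icc 0 π) := by
  intro a ha b hb hab
  have hcos : Real.cos b ≤ Real.cos a := cos_le_cos_of_nonneg_of_le_pi ha.1 hb.2 hab
  unfold cosineLawDist
  gcongr

lemma le_add_of_le_add {t u s a b c : ℝ} (ht : 0 ≤ t) (hu : 0 ≤ u) (hs : 0 ≤ s)
    (ha : a ≤ π) (hb : b ∈ Icc 0 π) (hc : c ∈ Icc 0 π) (hcab : c ≤ a + b) :
    cosineLawDist t s c ≤ cosineLawDist t u a + cosineLawDist u s b := by
  set b' := min b (π - a)
  have hb' : b' ∈ Icc 0 π := ⟨le_min hb.1 (by linarith), (min_le_left _ _).trans hb.2⟩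
  have hcab' : c ≤ a + b' := by
    have := le_min (sub_le_iff_le_add'.2 hcab) (sub_le_sub_right hc.2 a)
    linarith
  have hab' : a + b' ∈ Icc 0 π := ⟨hc.1.trans hcab', by linarith [min_le_right b (π - a)]⟩
  calc cosineLawDist t s c ≤ cosineLawDist t s (a + b') := monotoneOn ht hs hc hab' hcab'
    _ ≤ cosineLawDist t u a + cosineLawDist u s b' := add_le t u s a b'
    _ ≤ cosineLawDist t u a + cosineLawDist u s b := by
        gcongr
        exact monotoneOn hu hs hb' hb (min_le_left _ _)

lemma eq_zero_iff {t s θ : ℝ} (ht : 0 ≤ t) (hs : 0 ≤ s) (hθ₀ : 0 ≤ θ) (hθ : θ < 2 * π) :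
    cosineLawDist t s θ = 0 ↔ t = s ∧ (t = 0 ∨ θ = 0) := by
  have hcos : Real.cos θ = 1 ↔ θ = 0 :=
    cos_eq_one_iff_of_lt_of_lt (by linarith [Real.pi_pos]) hθ
  have hsplit : t ^ 2 + s ^ 2 - 2 * t * s * Real.cos θ
      = (t - s) ^ 2 + 2 * (t * s) * (1 - Real.cos θ) := by ring
  have hangle : 0 ≤ 2 * (t * s) * (1 - Real.cos θ) := by
    have := cos_le_one θ
    have := mul_nonneg ht hs
    positivity
  rw [cosineLawDist, sqrt_eq_zero', hsplit, ← hcos]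
  constructor
  · intro h
    have hts : t = s := by nlinarith [sq_nonneg (t - s)]
    subst hts
    have : t * t * (1 - Real.cos θ) = 0 := by nlinarith
    rcases mul_eq_zero.1 this with h0 | h1
    · exact ⟨rfl, .inl (mul_self_eq_zero.1 h0)⟩
    · exact ⟨rfl, .inr (by linarith)⟩
  · rintro ⟨rfl, rfl | h⟩ <;> simp [*]

end cosineLawDist

section ConeDist

variable {S : Type*} [MetricSpace S]

lemma coneDist_comm (p q : S × ℝ≥0) : coneDist p q = coneDist q p := by
  rw [coneDist_eq_cosineLawDist, coneDist_eq_cosineLawDist, dist_comm, cosineLawDist.comm]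

lemma coneDist_triangle (hdiam : ∀ x y : S, dist x y ≤ π) (p q r : S × ℝ≥0) :
    coneDist p r ≤ coneDist p q + coneDist q r :=
  cosineLawDist.le_add_of_le_add p.2.coe_nonneg q.2.coe_nonneg r.2.coe_nonneg (hdiam _ _) ⟨dist_nonneg, hdiam _ _⟩
    ⟨dist_nonneg, hdiam _ _⟩ (dist_triangle _ _ _)

lemma coneDist_eq_zero_iff (hdiam : ∀ x y : S, dist x y ≤ π) (p q : S × ℝ≥0) :
    coneDist p q = 0 ↔ p.2 = q.2 ∧ (p.2 = 0 ∨ p.1 = q.1) := by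
  rw [coneDist_eq_cosineLawDist, cosineLawDist.eq_zero_iff p.2.coe_nonneg q.2.coe_nonneg dist_nonneg
    ((hdiam p.1 q.1).trans_lt (by linarith [Real.pi_pos])), dist_eq_zero, NNReal.coe_inj,
    NNReal.coe_eq_zero]

end ConeDist

lemma exists_metricSpace_quot {X : Type*} (d : X → X → ℝ) (d_self : ∀ x, d x x = 0)
    (d_comm : ∀ x y, d x y = d y x) (d_triangle : ∀ x y z, d x z ≤ d x y + d y z) :
    ∃ m : MetricSpace (Quot fun x y => d x y = 0),
      ∀ x y, @dist _ m.toDist (Quot.mk _ x) (Quot.mk _ y) = d x y := by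
  have congr_right (x y y' : X) (h : d y y' = 0) : d x y = d x y' := by
    linarith [d_triangle x y y', d_triangle x y' y, d_comm y y']
  have congr_left (x x' y : X) (h : d x x' = 0) : d x y = d x' y := by
    rw [d_comm x, d_comm x', congr_right y x x' h]
  refine ⟨{
    dist := Quot.lift₂ d congr_right congr_left
    dist_self := fun x => Quot.induction_on x d_self
    dist_comm := fun x y => Quot.induction_on₂ x y d_comm
    dist_triangle := fun x y z => Quot.induction_on₃ x y z d_triangle
    eq_of_dist_eq_zero := fun {x y} => Quot.induction_on₂ x y fun _ _ h => Quot.sound h },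
    fun _ _ => rfl⟩

/-- If `(Σ, d)` has diameter at most `π`, then the cone distance on
`Σ × [0,∞)` is a pseudometric, vanishing exactly when `t = s` and either
`t = 0` or `x = y`; in particular it descends to a metric on the cone
`Σ × [0,∞) / (Σ × {0})`. -/
theorem coneDist_pseudometric {S : Type*} [MetricSpace S]
    (hdiam : ∀ x y : S, dist x y ≤ Real.pi) :
    (∀ p q : S × ℝ≥0, 0 ≤ coneDist p q) ∧
    (∀ p q : S × ℝ≥0, coneDist p q = coneDist q p) ∧
    (∀ p q r : S × ℝ≥0, coneDist p r ≤ coneDist p q + coneDist q r) ∧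
    (∀ p q : S × ℝ≥0,
      coneDist p q = 0 ↔ p.2 = q.2 ∧ (p.2 = 0 ∨ p.1 = q.1)) ∧
    (∃ m : MetricSpace (Quot (fun p q : S × ℝ≥0 => coneDist p q = 0)),
      ∀ p q : S × ℝ≥0,
        @dist _ m.toPseudoMetricSpace.toDist
          (Quot.mk _ p) (Quot.mk _ q) = coneDist p q) := by
  have coneDist_self (p : S × ℝ≥0) : coneDist p p = 0 :=
    (coneDist_eq_zero_iff hdiam p p).2 ⟨rfl, .inr rfl⟩
  exact ⟨fun _ _ => sqrt_nonneg _, coneDist_comm, coneDist_triangle hdiam,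
    coneDist_eq_zero_iff hdiam,
    exists_metricSpace_quot coneDist coneDist_self coneDist_comm (coneDist_triangle hdiam)⟩
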